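/- arXiv:2505.07739 — 2 statements merged into one kernel-verified Lean document; each statement's English description precedes it below -/
import Mathlib

section
/- Let k be a field of characteristic zero and R = k[x_1, x_2, x_3, …] the polynomial ring in countably many variables. The operator D_ω = Σ_{i=1}^∞ ∂^i/∂x_i^i is a well-defined k-linear map R → R which is a quite R-differential operator of ordinal order ω but not a strongly R-differential operator: for every n ≥ 0, there exist r_0, …, r_n ∈ R with θ_{r_n}⋯θ_{r_0}(D_ω) ≠ 0, while for every single f ∈ R the commutator [f, D_ω] is a differential operator of finite order. -/
/-!
A power `∂ᵢ ^ a` is a strongly differential operator of order `≤ a`, and `θ_f` commutes with `∂ᵢ`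
whenever `xᵢ` does not occur in `f`. Hence `θ_f D_ω` is the finite sum of the `θ_f (∂ᵢ ^ i)` over
the variables of `f`, of order bounded by the largest such `i`, which puts `D_ω` in `F_ω`. On the
other hand only the summand `∂ₘ ^ m` survives `θ_{xₘ}`, and `[xₘ, ∂ₘ ^ (a + 1)] = -(a + 1) ∂ₘ ^ a`
gives `θ_{xₘ}^m D_ω = (-1)^m m!`, nonzero in characteristic zero; so `D_ω` has no finite strong
order, while the finite levels `F_n` consist exactly of the operators of strong order `≤ n`.
-/

open MvPolynomial

/-- The commutator operator `θ_r(e) = r ∘ e − e ∘ r` on `K`-linear maps `U → V`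
between `R`-modules. -/
def theta (K R U V : Type) [CommRing K] [CommRing R] [AddCommGroup U] [AddCommGroup V]
    [Module K U] [Module K V] [Module R U] [Module R V]
    [SMulCommClass K R U] [SMulCommClass K R V]
    (r : R) (e : U →ₗ[K] V) : U →ₗ[K] V where
  toFun u := r • e u - e (r • u)
  map_add' u₁ u₂ := by
    simp only [map_add, smul_add]
    abel
  map_smul' c u := by
    simp only [RingHom.id_apply]
    rw [← smul_comm c r u]
    simp only [map_smul]
    rw [← smul_comm c r (e u), ← smul_sub]

/-- The ordinal-indexed filtration on `K`-linear maps `U → V` by the ordinal order of a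
differential operator: `F_0 = {e : θ_r e = 0 ∀ r}` and
`F_α = {e : θ_r e ∈ ⋃_{β<α} F_β ∀ r}`.  A quite differential operator of ordinal order
`≤ α` is an element of `F_α`. -/
noncomputable def opFilt (K R U V : Type) [CommRing K] [CommRing R] [AddCommGroup U]
    [AddCommGroup V] [Module K U] [Module K V] [Module R U] [Module R V]
    [SMulCommClass K R U] [SMulCommClass K R V] : Ordinal.{0} → Set (U →ₗ[K] V) :=
  WellFounded.fix Ordinal.lt_wf (C := fun _ => Set (U →ₗ[K] V)) fun α F =>
    { e | ∀ r : R, theta K R U V r e = 0 ∨ ∃ β, ∃ h : β < α, theta K R U V r e ∈ F β h }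

section Theta

variable {K R U V W : Type} [CommRing K] [CommRing R]
  [AddCommGroup U] [AddCommGroup V] [AddCommGroup W]
  [Module K U] [Module K V] [Module K W] [Module R U] [Module R V] [Module R W]
  [SMulCommClass K R U] [SMulCommClass K R V] [SMulCommClass K R W]

@[simp] lemma theta_apply (r : R) (e : U →ₗ[K] V) (u : U) :
    theta K R U V r e u = r • e u - e (r • u) := rfl

@[simp] lemma theta_zero (r : R) : theta K R U V r 0 = 0 := by
  ext; simp

lemma theta_add (r : R) (e e' : U →ₗ[K] V) :
    theta K R U V r (e + e') = theta K R U V r e + theta K R U V r e' := by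
  ext; simp only [theta_apply, LinearMap.add_apply, smul_add]; abel

lemma theta_smul (r : R) (c : K) (e : U →ₗ[K] V) :
    theta K R U V r (c • e) = c • theta K R U V r e := by
  ext u; simp only [theta_apply, LinearMap.smul_apply, smul_sub, (smul_comm c r (e u)).symm]

lemma theta_comp (r : R) (a : V →ₗ[K] W) (b : U →ₗ[K] V) :
    theta K R U W r (a ∘ₗ b) = theta K R V W r a ∘ₗ b + a ∘ₗ theta K R U V r b := by
  ext; simp

lemma theta_id (r : R) : theta K R U U r LinearMap.id = 0 := by
  ext; simp

lemma theta_mul (r : R) (a b : Module.End K U) :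
    theta K R U U r (a * b) = theta K R U U r a * b + a * theta K R U U r b :=
  theta_comp r a b

lemma theta_pow_eq_zero {r : R} {a : Module.End K U} (h : theta K R U U r a = 0) :
    ∀ n : ℕ, theta K R U U r (a ^ n) = 0
  | 0 => theta_id r
  | n + 1 => by rw [pow_succ, theta_mul, theta_pow_eq_zero h n, h, zero_mul, mul_zero, add_zero]

lemma foldr_theta_smul (rs : List R) (c : K) (e : U →ₗ[K] V) :
    rs.foldr (theta K R U V) (c • e) = c • rs.foldr (theta K R U V) e := by
  induction rs with
  | nil => rfl
  | cons r rs ih => simp only [List.foldr_cons, ih, theta_smul]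

variable (R) in
/-- `IsDiffOpLT R n e`: every composition of `n` operators `θ_r` kills `e`, i.e. `e` is a strongly
`R`-differential operator of order `< n`; the paper's order `≤ n` is `IsDiffOpLT R (n + 1)`. -/
def IsDiffOpLT : ℕ → (U →ₗ[K] V) → Prop
  | 0, e => e = 0
  | n + 1, e => ∀ r : R, IsDiffOpLT n (theta K R U V r e)

namespace IsDiffOpLT

lemma zero (n : ℕ) : IsDiffOpLT R n (0 : U →ₗ[K] V) := by
  induction n with
  | zero => rfl
  | succ n ih => intro r; rw [theta_zero]; exact ih

lemma add {n : ℕ} {e e' : U →ₗ[K] V} (h : IsDiffOpLT R n e) (h' : IsDiffOpLT R n e') :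
    IsDiffOpLT R n (e + e') := by
  induction n generalizing e e' with
  | zero => simp only [IsDiffOpLT] at h h' ⊢; rw [h, h', add_zero]
  | succ n ih => intro r; rw [theta_add]; exact ih (h r) (h' r)

lemma sum {n : ℕ} {ι : Type} {s : Finset ι} {e : ι → U →ₗ[K] V}
    (h : ∀ i ∈ s, IsDiffOpLT R n (e i)) : IsDiffOpLT R n (∑ i ∈ s, e i) :=
  Finset.sum_induction e _ (fun _ _ => add) (zero n) h

lemma succ {n : ℕ} {e : U →ₗ[K] V} (h : IsDiffOpLT R n e) : IsDiffOpLT R (n + 1) e := by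
  induction n generalizing e with
  | zero => intro r; simp only [IsDiffOpLT] at h ⊢; rw [h, theta_zero]
  | succ n ih => exact fun r => ih (h r)

lemma mono {m n : ℕ} {e : U →ₗ[K] V} (h : IsDiffOpLT R m e) (hmn : m ≤ n) :
    IsDiffOpLT R n e := by
  induction hmn with
  | refl => exact h
  | step _ ih => exact ih.succ

lemma foldr {rs : List R} {n : ℕ} {e : U →ₗ[K] V} (h : IsDiffOpLT R (n + rs.length) e) :
    IsDiffOpLT R n (rs.foldr (theta K R U V) e) := by
  induction rs generalizing n with
  | nil => exact h
  | cons r rs ih =>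
    rw [List.length_cons, Nat.add_comm rs.length, ← Nat.add_assoc] at h
    exact ih h r

lemma foldr_eq_zero {rs : List R} {e : U →ₗ[K] V} (h : IsDiffOpLT R rs.length e) :
    rs.foldr (theta K R U V) e = 0 :=
  foldr (n := 0) (by rwa [Nat.zero_add])

lemma comp {m n : ℕ} {a : V →ₗ[K] W} {b : U →ₗ[K] V} (ha : IsDiffOpLT R (m + 1) a)
    (hb : IsDiffOpLT R (n + 1) b) : IsDiffOpLT R (m + n + 1) (a ∘ₗ b) := by
  induction h : m + n using Nat.strong_induction_on generalizing m n a b with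
  | _ N ih =>
    intro r
    rw [theta_comp]
    refine add ?_ ?_
    · cases m with
      | zero => rw [show theta K R V W r a = 0 from ha r, LinearMap.zero_comp]; exact zero _
      | succ m =>
        rw [← h, Nat.add_right_comm]
        exact ih (m + n) (by omega) (ha r) hb rfl
    · cases n with
      | zero => rw [show theta K R U V r b = 0 from hb r, LinearMap.comp_zero]; exact zero _
      | succ n =>
        rw [← h]
        exact ih (m + n) (by omega) ha (hb r) rfl

lemma pow {m : ℕ} {a : Module.End K U} (ha : IsDiffOpLT R (m + 1) a) :
    ∀ n : ℕ, IsDiffOpLT R (m * n + 1) (a ^ n)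
  | 0 => fun r => theta_id r
  | n + 1 => by rw [pow_succ, Nat.mul_succ]; exact (pow ha n).comp ha

end IsDiffOpLT

lemma mem_opFilt_iff (α : Ordinal) (e : U →ₗ[K] V) :
    e ∈ opFilt K R U V α ↔
      ∀ r : R, theta K R U V r e = 0 ∨ ∃ β < α, theta K R U V r e ∈ opFilt K R U V β := by
  rw [opFilt, WellFounded.fix_eq]
  simp only [Set.mem_ofPred_eq, exists_prop]

lemma mem_opFilt_natCast_iff (n : ℕ) (e : U →ₗ[K] V) :
    e ∈ opFilt K R U V n ↔ IsDiffOpLT R (n + 1) e := by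
  induction n using Nat.strong_induction_on generalizing e with
  | _ n ih =>
    rw [mem_opFilt_iff]
    refine forall_congr' fun r => ⟨?_, fun h => ?_⟩
    · rintro (h | ⟨β, hβ, hmem⟩)
      · rw [h]; exact IsDiffOpLT.zero n
      · obtain ⟨m, rfl⟩ := Ordinal.lt_omega0.mp (hβ.trans (Ordinal.natCast_lt_omega0 n))
        exact ((ih m (by exact_mod_cast hβ) _).mp hmem).mono (by exact_mod_cast hβ)
    · cases n with
      | zero => exact Or.inl h
      | succ m => exact Or.inr ⟨m, by exact_mod_cast m.lt_succ_self, (ih m m.lt_succ_self _).mpr h⟩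

lemma mem_opFilt_omega0_iff (e : U →ₗ[K] V) :
    e ∈ opFilt K R U V Ordinal.omega0 ↔ ∀ r : R, ∃ n, IsDiffOpLT R n (theta K R U V r e) := by
  rw [mem_opFilt_iff]
  refine forall_congr' fun r => ⟨?_, ?_⟩
  · rintro (h | ⟨β, hβ, hmem⟩)
    · exact ⟨0, h⟩
    · obtain ⟨m, rfl⟩ := Ordinal.lt_omega0.mp hβ
      exact ⟨m + 1, (mem_opFilt_natCast_iff m _).mp hmem⟩
  · rintro ⟨_ | m, h⟩
    · exact Or.inl h
    · exact Or.inr ⟨m, Ordinal.natCast_lt_omega0 m, (mem_opFilt_natCast_iff m _).mpr h⟩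

end Theta

lemma isDiffOpLT_one_mulLeft {k A : Type} [CommRing k] [CommRing A] [Algebra k A] (c : A) :
    IsDiffOpLT A 1 (LinearMap.mulLeft k c) :=
  fun r => LinearMap.ext fun g => by simp [mul_left_comm r c]

section Pderiv

variable {σ k : Type} [CommRing k]

local notation "θ" => theta k (MvPolynomial _ k) (MvPolynomial _ k) (MvPolynomial _ k)
local notation "∂[" i "]" => Derivation.toLinearMap (R := k) (pderiv i)

lemma theta_pderiv (r : MvPolynomial σ k) (i : σ) :
    θ r ∂[i] = LinearMap.mulLeft k (-pderiv i r) := by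
  refine LinearMap.ext fun g => ?_
  simp only [theta_apply, smul_eq_mul, Derivation.coeFn_coe, pderiv_mul,
    LinearMap.mulLeft_apply]
  ring

lemma isDiffOpLT_pderiv_pow (i : σ) (n : ℕ) :
    IsDiffOpLT (MvPolynomial σ k) (n + 1) (∂[i] ^ n) := by
  have h : IsDiffOpLT (MvPolynomial σ k) (1 + 1) ∂[i] := fun r => by
    rw [theta_pderiv]
    exact isDiffOpLT_one_mulLeft _
  simpa using h.pow n

lemma theta_pderiv_pow_of_notMem_vars {r : MvPolynomial σ k} {i : σ} (h : i ∉ r.vars) (n : ℕ) :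
    θ r (∂[i] ^ n) = 0 :=
  theta_pow_eq_zero (by
    rw [theta_pderiv, pderiv_eq_zero_of_notMem_vars h, neg_zero, LinearMap.mulLeft_zero_eq_zero]) n

lemma pderiv_pow_apply_eq_zero {f : MvPolynomial σ k} {i : σ} (h : i ∉ f.vars) {n : ℕ}
    (hn : n ≠ 0) : (∂[i] ^ n) f = 0 := by
  obtain ⟨n, rfl⟩ := Nat.exists_eq_succ_of_ne_zero hn
  rw [pow_succ, Module.End.mul_apply, Derivation.coeFn_coe,
    pderiv_eq_zero_of_notMem_vars h, map_zero]

lemma theta_X_pderiv_pow (i : σ) (a : ℕ) :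
    θ (X i) (∂[i] ^ (a + 1)) = (-(a + 1 : k)) • ∂[i] ^ a := by
  have hX : θ (X i) ∂[i] = (-1 : k) • 1 := by
    rw [theta_pderiv, pderiv_X_self]
    ext g
    simp
  induction a with
  | zero => simp [hX]
  | succ a ih =>
    rw [pow_succ, theta_mul, ih, hX, smul_mul_assoc, ← pow_succ, mul_smul_comm, mul_one]
    push_cast
    module

lemma foldr_replicate_X_pderiv_pow (i : σ) (a : ℕ) :
    (List.replicate a (X i)).foldr θ (∂[i] ^ a) = ((-1) ^ a * a.factorial : k) • 1 := by
  induction a with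
  | zero => simp
  | succ a ih =>
    rw [List.replicate_succ', List.foldr_append, List.foldr_cons, List.foldr_nil,
      theta_X_pderiv_pow, foldr_theta_smul, ih, smul_smul, Nat.factorial_succ]
    congr 1
    push_cast
    ring

end Pderiv

section Domega

variable {k : Type} [CommRing k]

local notation "θ" => theta k (MvPolynomial ℕ+ k) (MvPolynomial ℕ+ k) (MvPolynomial ℕ+ k)
local notation "∂[" i "]" => Derivation.toLinearMap (R := k) (pderiv i)

lemma support_pderiv_pow_apply_subset (f : MvPolynomial ℕ+ k) :
    (Function.support fun i : ℕ+ => (∂[i] ^ (i : ℕ)) f) ⊆ f.vars := fun i hi => by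
  by_contra h
  exact hi (pderiv_pow_apply_eq_zero h i.ne_zero)

lemma finite_support_pderiv_pow_apply (f : MvPolynomial ℕ+ k) :
    (Function.support fun i : ℕ+ => (∂[i] ^ (i : ℕ)) f).Finite :=
  f.vars.finite_toSet.subset (support_pderiv_pow_apply_subset f)

noncomputable def Dω : Module.End k (MvPolynomial ℕ+ k) where
  toFun f := ∑ᶠ i : ℕ+, (∂[i] ^ (i : ℕ)) f
  map_add' f g := by
    rw [← finsum_add_distrib (finite_support_pderiv_pow_apply f)
      (finite_support_pderiv_pow_apply g)]
    exact finsum_congr fun i => map_add _ f g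
  map_smul' c f := by
    rw [RingHom.id_apply, smul_finsum' c (finite_support_pderiv_pow_apply f)]
    exact finsum_congr fun i => map_smul _ c f

lemma Dω_apply_eq_sum {f : MvPolynomial ℕ+ k} {s : Finset ℕ+} (hs : f.vars ⊆ s) :
    Dω f = ∑ i ∈ s, (∂[i] ^ (i : ℕ)) f :=
  finsum_eq_sum_of_support_subset _ ((support_pderiv_pow_apply_subset f).trans hs)

lemma theta_Dω (f : MvPolynomial ℕ+ k) : θ f Dω = ∑ i ∈ f.vars, θ f (∂[i] ^ (i : ℕ)) := by
  classical
  refine LinearMap.ext fun g => ?_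
  have hfg : (f * g).vars ⊆ f.vars ∪ g.vars := vars_mul f g
  rw [theta_apply, smul_eq_mul, smul_eq_mul, Dω_apply_eq_sum Finset.subset_union_right,
    Dω_apply_eq_sum hfg, Finset.mul_sum, ← Finset.sum_sub_distrib, LinearMap.sum_apply]
  symm
  refine Finset.sum_subset Finset.subset_union_left fun i _ hi => ?_
  simpa using LinearMap.congr_fun (theta_pderiv_pow_of_notMem_vars hi (i : ℕ)) g

lemma isDiffOpLT_theta_Dω (f : MvPolynomial ℕ+ k) :
    IsDiffOpLT (MvPolynomial ℕ+ k) (f.vars.sup (↑)) (θ f Dω) := by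
  rw [theta_Dω]
  exact IsDiffOpLT.sum fun i hi =>
    (isDiffOpLT_pderiv_pow i (i : ℕ) f).mono (Finset.le_sup (f := ((↑) : ℕ+ → ℕ)) hi)

lemma foldr_replicate_X_Dω [Nontrivial k] (m : ℕ+) :
    (List.replicate m (X m)).foldr θ Dω = ((-1) ^ (m : ℕ) * (m : ℕ).factorial : k) • 1 := by
  have hX : θ (X m) Dω = θ (X m) (∂[m] ^ (m : ℕ)) := by
    rw [theta_Dω, vars_X, Finset.sum_singleton]
  obtain ⟨n, hn⟩ : ∃ n, (m : ℕ) = n + 1 := ⟨m.natPred, m.natPred_add_one.symm⟩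
  rw [← foldr_replicate_X_pderiv_pow, hn, List.replicate_succ', List.foldr_append,
    List.foldr_append, List.foldr_cons, List.foldr_cons, List.foldr_nil, List.foldr_nil, hX, hn]

lemma foldr_replicate_X_Dω_ne_zero [CharZero k] (m : ℕ+) :
    (List.replicate m (X m)).foldr θ Dω ≠ 0 := by
  rw [foldr_replicate_X_Dω]
  intro h
  have h1 := LinearMap.congr_fun h 1
  rw [LinearMap.smul_apply, Module.End.one_apply, LinearMap.zero_apply, smul_eq_C_mul, mul_one,
    C_eq_zero, ((isUnit_neg_one (α := k)).pow _).mul_right_eq_zero] at h1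
  exact Nat.cast_ne_zero.mpr (Nat.factorial_ne_zero _) h1

end Domega

/-- For `R = k[x_1, x_2, x_3, …]` over a field `k` of characteristic zero, the operator
`D_ω = Σ_{i=1}^∞ ∂^i/∂x_i^i` is a well-defined `k`-linear map `R → R`; it is a quite
`R`-differential operator of ordinal order exactly `ω`, but not a strongly
`R`-differential operator: for every `n` there exist `r_0, …, r_n ∈ R` with
`θ_{r_n} ⋯ θ_{r_0} (D_ω) ≠ 0`, while for every single `f ∈ R` the commutator
`[f, D_ω] = θ_f(D_ω)` is a differential operator of finite order. -/
theorem stmt13 (k : Type) [Field k] [CharZero k] :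
    ∃ D : MvPolynomial ℕ+ k →ₗ[k] MvPolynomial ℕ+ k,
      (∀ f : MvPolynomial ℕ+ k,
        D f = ∑ᶠ i : ℕ+, (fun g => MvPolynomial.pderiv i g)^[(i : ℕ)] f) ∧
      D ∈ opFilt k (MvPolynomial ℕ+ k) (MvPolynomial ℕ+ k) (MvPolynomial ℕ+ k)
          Ordinal.omega0 ∧
      (∀ β < Ordinal.omega0,
        D ∉ opFilt k (MvPolynomial ℕ+ k) (MvPolynomial ℕ+ k) (MvPolynomial ℕ+ k) β) ∧
      (∀ n : ℕ, ∃ rs : List (MvPolynomial ℕ+ k), rs.length = n + 1 ∧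
        rs.foldr (fun r e =>
          theta k (MvPolynomial ℕ+ k) (MvPolynomial ℕ+ k) (MvPolynomial ℕ+ k) r e) D ≠ 0) ∧
      (∀ f : MvPolynomial ℕ+ k, ∃ n : ℕ, ∀ rs : List (MvPolynomial ℕ+ k),
        rs.length = n + 1 →
        rs.foldr (fun r e =>
            theta k (MvPolynomial ℕ+ k) (MvPolynomial ℕ+ k) (MvPolynomial ℕ+ k) r e)
          (theta k (MvPolynomial ℕ+ k) (MvPolynomial ℕ+ k) (MvPolynomial ℕ+ k) f D)
          = 0) := by
  refine ⟨Dω, fun f => finsum_congr fun i => Module.End.pow_apply _ _ _, ?_, ?_, ?_, ?_⟩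
  · exact (mem_opFilt_omega0_iff _).mpr fun f => ⟨_, isDiffOpLT_theta_Dω f⟩
  · intro β hβ hD
    obtain ⟨n, rfl⟩ := Ordinal.lt_omega0.mp hβ
    refine foldr_replicate_X_Dω_ne_zero (k := k) n.succPNat (IsDiffOpLT.foldr_eq_zero ?_)
    rw [List.length_replicate]
    exact (mem_opFilt_natCast_iff n Dω).mp hD
  · exact fun n => ⟨_, List.length_replicate, foldr_replicate_X_Dω_ne_zero n.succPNat⟩
  · refine fun f => ⟨f.vars.sup (↑), fun rs hl => IsDiffOpLT.foldr_eq_zero ?_⟩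
    rw [hl]
    exact (isDiffOpLT_theta_Dω f).succ
end

section
/- Let κ be an infinite regular cardinal, T a commutative ring, and I ⊂ T an ideal generated by fewer than κ elements. If M is a quite I-torsion T-module, then M = ⋃_{β<κ} F^(I)_β M; in particular F^(I)_κ M = ⋃_{β<κ} F^(I)_β M. -/
/-!
Each `F^(I)_γ M` is a submodule, so whether `I m ⊆ F^(I)_γ M` only depends on the elements
`g • m` for `g` in a generating set `G` of `I`.
By induction on `β`, every element of `F^(I)_β M` already lies in some `F^(I)_γ M` with
`γ < κ`: the levels reached by the elements `g • m` are fewer than `κ` ordinals below `κ`,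
so by regularity their supremum `δ` is still below `κ`, and `m ∈ F^(I)_{δ+1} M`.
-/

/-- The ordinal-indexed increasing filtration `F^(I)` on a `T`-module `M`:
`F^(I)_0 M = {m : I m = 0}` and `F^(I)_α M = {m : I m ⊆ ⋃_{β < α} F^(I)_β M}`. -/
noncomputable def Ffilt (T : Type) [CommRing T] (I : Ideal T) (M : Type) [AddCommGroup M]
    [Module T M] : Ordinal.{0} → Set M :=
  WellFounded.fix Ordinal.lt_wf (C := fun _ => Set M) fun α F =>
    { m | ∀ s ∈ I, s • m = 0 ∨ ∃ β, ∃ h : β < α, s • m ∈ F β h }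

section Ffilt

variable {T : Type} [CommRing T] {I : Ideal T} {M : Type} [AddCommGroup M] [Module T M]

lemma mem_Ffilt {α : Ordinal.{0}} {m : M} :
    m ∈ Ffilt T I M α ↔ ∀ s ∈ I, s • m = 0 ∨ ∃ β < α, s • m ∈ Ffilt T I M β := by
  conv_lhs => rw [Ffilt, WellFounded.fix_eq]
  simp only [Set.mem_ofPred_eq, exists_prop]
  rfl

lemma Ffilt_mono : Monotone (Ffilt T I M) := by
  intro α α' hαα' m hm
  rw [mem_Ffilt] at hm ⊢
  intro s hs
  obtain h0 | ⟨β, hβ, hmem⟩ := hm s hs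
  · exact Or.inl h0
  · exact Or.inr ⟨β, hβ.trans_le hαα', hmem⟩

lemma mem_Ffilt_of_smul_mem {α δ : Ordinal.{0}} {m : M} (hδ : δ < α)
    (h : ∀ s ∈ I, s • m ∈ Ffilt T I M δ) : m ∈ Ffilt T I M α :=
  mem_Ffilt.2 fun s hs => Or.inr ⟨δ, hδ, h s hs⟩

lemma zero_mem_Ffilt (α : Ordinal.{0}) : (0 : M) ∈ Ffilt T I M α :=
  mem_Ffilt.2 fun s _ => Or.inl (smul_zero s)

lemma add_mem_Ffilt (α : Ordinal.{0}) {m m' : M} (hm : m ∈ Ffilt T I M α)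
    (hm' : m' ∈ Ffilt T I M α) : m + m' ∈ Ffilt T I M α := by
  induction α using WellFoundedLT.induction generalizing m m' with
  | _ α IH =>
    rw [mem_Ffilt] at hm hm' ⊢
    intro s hs
    rw [smul_add]
    obtain h0 | ⟨β, hβ, hmem⟩ := hm s hs <;> obtain h0' | ⟨β', hβ', hmem'⟩ := hm' s hs
    · exact Or.inl (by rw [h0, h0', add_zero])
    · exact Or.inr ⟨β', hβ', by rwa [h0, zero_add]⟩
    · exact Or.inr ⟨β, hβ, by rwa [h0', add_zero]⟩
    · exact Or.inr ⟨max β β', max_lt hβ hβ', IH _ (max_lt hβ hβ')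
        (Ffilt_mono (le_max_left β β') hmem) (Ffilt_mono (le_max_right β β') hmem')⟩

lemma smul_mem_Ffilt (α : Ordinal.{0}) (t : T) {m : M} (hm : m ∈ Ffilt T I M α) :
    t • m ∈ Ffilt T I M α := by
  induction α using WellFoundedLT.induction generalizing m with
  | _ α IH =>
    rw [mem_Ffilt] at hm ⊢
    intro s hs
    rw [smul_comm]
    obtain h0 | ⟨β, hβ, hmem⟩ := hm s hs
    · exact Or.inl (by rw [h0, smul_zero])
    · exact Or.inr ⟨β, hβ, IH β hβ hmem⟩

noncomputable def FfiltSubmodule (α : Ordinal.{0}) : Submodule T M where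
  carrier := Ffilt T I M α
  zero_mem' := zero_mem_Ffilt α
  add_mem' := add_mem_Ffilt α
  smul_mem' t _ := smul_mem_Ffilt α t

lemma smul_mem_Ffilt_of_span {G : Set T} {δ : Ordinal.{0}} {m : M}
    (hG : ∀ g ∈ G, g • m ∈ Ffilt T I M δ) :
    ∀ s ∈ Ideal.span G, s • m ∈ Ffilt T I M δ :=
  fun _ hs => (Ideal.span_le (I := (FfiltSubmodule (I := I) δ).comap
    (LinearMap.toSpanSingleton T M m))).2 hG hs

lemma exists_lt_mem_Ffilt {a : Ordinal.{0}} (ha : Order.IsSuccLimit a) {G : Set T}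
    (hGI : I = Ideal.span G) (hGa : Cardinal.mk G < a.cof) (β : Ordinal.{0}) {m : M}
    (hm : m ∈ Ffilt T I M β) : ∃ γ < a, m ∈ Ffilt T I M γ := by
  induction β using WellFoundedLT.induction generalizing m with
  | _ β IH =>
    have hlevel : ∀ g : G, ∃ γ < a, (g : T) • m ∈ Ffilt T I M γ := by
      intro g
      obtain h0 | ⟨γ, hγ, hmem⟩ := mem_Ffilt.1 hm g (hGI ▸ Ideal.subset_span g.2)
      · exact ⟨0, ha.bot_lt, h0 ▸ zero_mem_Ffilt 0⟩
      · exact IH γ hγ hmem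
    choose γ hγa hγ using hlevel
    have hδ : ⨆ g, γ g < a := Ordinal.iSup_lt_of_lt_cof hGa hγa
    have hGδ : ∀ g ∈ G, g • m ∈ Ffilt T I M (⨆ g, γ g) := fun g hg =>
      Ffilt_mono (Ordinal.le_iSup γ ⟨g, hg⟩) (hγ ⟨g, hg⟩)
    exact ⟨Order.succ (⨆ g, γ g), ha.succ_lt hδ, mem_Ffilt_of_smul_mem (Order.lt_succ _)
      fun s hs => smul_mem_Ffilt_of_span hGδ s (hGI ▸ hs)⟩

end Ffilt

/-- If `κ` is an infinite regular cardinal, `I ⊆ T` is an ideal generated by fewer than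
`κ` elements, and `M` is a quite `I`-torsion `T`-module, then
`M = ⋃_{β < κ} F^(I)_β M`; in particular `F^(I)_κ M = ⋃_{β < κ} F^(I)_β M`. -/
theorem stmt16 (κ : Cardinal.{0}) (hreg : κ.IsRegular)
    (T : Type) [CommRing T] (I : Ideal T)
    (G : Set T) (hGI : I = Ideal.span G) (hGκ : Cardinal.mk G < κ)
    (M : Type) [AddCommGroup M] [Module T M]
    (hM : ∀ m : M, ∃ β : Ordinal.{0}, m ∈ Ffilt T I M β) :
    (∀ m : M, ∃ β < κ.ord, m ∈ Ffilt T I M β) ∧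
    Ffilt T I M κ.ord = ⋃ (β : Ordinal.{0}) (_ : β < κ.ord), Ffilt T I M β := by
  have hlim : Order.IsSuccLimit κ.ord := Cardinal.isSuccLimit_ord hreg.aleph0_le
  have hGcof : Cardinal.mk G < κ.ord.cof := by rwa [hreg.cof_ord]
  have hbounded : ∀ m : M, ∃ β < κ.ord, m ∈ Ffilt T I M β := fun m =>
    (hM m).elim fun β hβ => exists_lt_mem_Ffilt hlim hGI hGcof β hβ
  refine ⟨hbounded, Set.Subset.antisymm ?_ ?_⟩
  · intro m _
    obtain ⟨β, hβ, hmem⟩ := hbounded m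
    exact Set.mem_biUnion hβ hmem
  · exact Set.iUnion₂_subset fun β hβ => Ffilt_mono hβ.le
end
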